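/- arXiv:2404.12160 — 4 statements merged into one kernel-verified Lean document; each statement's English description precedes it below -/
import Mathlib

section
/- Let W and T be real symmetric positive semi-definite n×n matrices satisfying null(W) ∩ null(T) = {0}. Then there exists a nonsingular real matrix P such that W = Pᵀ Λ P and T = Pᵀ Λ̃ P, where Λ = diag(λ₁,…,λₙ) and Λ̃ = diag(λ̃₁,…,λ̃ₙ) with λᵢ ≥ 0, λ̃ᵢ ≥ 0 and λᵢ + λ̃ᵢ = 1 for all i. -/
open Matrix

theorem stmt_3 {n : ℕ} (W T : Matrix (Fin n) (Fin n) ℝ)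
    (hW : W.PosSemidef) (hT : T.PosSemidef)
    (hker : LinearMap.ker W.mulVecLin ⊓ LinearMap.ker T.mulVecLin = ⊥) :
    ∃ (P : Matrix (Fin n) (Fin n) ℝ) (lam lam' : Fin n → ℝ),
      IsUnit P ∧
      (∀ i, 0 ≤ lam i ∧ 0 ≤ lam' i ∧ lam i + lam' i = 1) ∧
      W = P.transpose * Matrix.diagonal lam * P ∧
      T = P.transpose * Matrix.diagonal lam' * P := by
  classical
  set S := W + T with hSdef
  -- S is positive definite
  have hS : S.PosDef := by
    refine Matrix.posDef_iff_dotProduct_mulVec.2 ⟨hW.1.add hT.1, fun x hx => ?_⟩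
    have h1 : 0 ≤ star x ⬝ᵥ W *ᵥ x := (Matrix.posSemidef_iff_dotProduct_mulVec.1 hW).2 x
    have h2 : 0 ≤ star x ⬝ᵥ T *ᵥ x := (Matrix.posSemidef_iff_dotProduct_mulVec.1 hT).2 x
    have hsum : star x ⬝ᵥ S *ᵥ x = star x ⬝ᵥ W *ᵥ x + star x ⬝ᵥ T *ᵥ x := by
      simp [hSdef, Matrix.add_mulVec, dotProduct_add]
    rcases lt_or_eq_of_le (add_nonneg h1 h2) with h | h
    · rw [hsum]; exact h
    · exfalso
      have hW0 : W *ᵥ x = 0 := (hW.dotProduct_mulVec_zero_iff x).1 (by linarith)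
      have hT0 : T *ᵥ x = 0 := (hT.dotProduct_mulVec_zero_iff x).1 (by linarith)
      have : x ∈ LinearMap.ker W.mulVecLin ⊓ LinearMap.ker T.mulVecLin := by
        simp [LinearMap.mem_ker, Matrix.mulVecLin_apply, hW0, hT0]
      rw [hker] at this
      exact hx (by simpa using this)
  have hSps := hS.posSemidef
  set Q := (open scoped MatrixOrder in CFC.sqrt S) with hQdef
  have hQps : Q.PosSemidef := by open scoped MatrixOrder in exact (CFC.sqrt_nonneg S).posSemidef
  have hQQ : Q * Q = S := by open scoped MatrixOrder in exact CFC.sqrt_mul_sqrt_self S hSps.nonneg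
  have hdetQ : IsUnit Q.det := by
    have hmul : Q.det * Q.det = S.det := by rw [← Matrix.det_mul, hQQ]
    have : Q.det ≠ 0 := by
      intro h
      rw [h, mul_zero] at hmul
      exact hS.det_pos.ne' hmul.symm
    exact this.isUnit
  have hQunit : IsUnit Q := (Matrix.isUnit_iff_isUnit_det Q).2 hdetQ
  set R := Q⁻¹ with hRdef
  have hQR : Q * R = 1 := Matrix.mul_nonsing_inv Q hdetQ
  have hRQ : R * Q = 1 := Matrix.nonsing_inv_mul Q hdetQ
  have hQH : Qᴴ = Q := hQps.1
  have hRH : Rᴴ = R := by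
    rw [hRdef, Matrix.conjTranspose_nonsing_inv, hQH]
  -- M = R W R, 1 - M = R T R
  set M := R * W * R with hMdef
  have hMps : M.PosSemidef := by
    have := hW.conjTranspose_mul_mul_same R
    rwa [hRH] at this
  have hRSR : R * S * R = 1 := by
    rw [← hQQ]
    calc R * (Q * Q) * R = (R * Q) * (Q * R) := by noncomm_ring
    _ = 1 := by rw [hRQ, hQR, one_mul]
  have h1M : (1 : Matrix (Fin n) (Fin n) ℝ) - M = R * T * R := by
    have : R * S * R = R * W * R + R * T * R := by
      rw [hSdef]; noncomm_ring
    rw [hRSR] at this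
    rw [hMdef, this]; abel
  have h1Mps : ((1 : Matrix (Fin n) (Fin n) ℝ) - M).PosSemidef := by
    rw [h1M]
    have := hT.conjTranspose_mul_mul_same R
    rwa [hRH] at this
  have hMh : M.IsHermitian := hMps.1
  set U : Matrix (Fin n) (Fin n) ℝ := (hMh.eigenvectorUnitary : Matrix (Fin n) (Fin n) ℝ)
    with hUdef
  set lam := hMh.eigenvalues with hlamdef
  have hspec : M = U * Matrix.diagonal lam * star U := by
    have := hMh.spectral_theorem
    simpa using this
  have hUmem := hMh.eigenvectorUnitary.2
  have hUsU : star U * U = 1 := Matrix.mem_unitaryGroup_iff'.1 hUmem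
  have hUUs : U * star U = 1 := Matrix.mem_unitaryGroup_iff.1 hUmem
  -- 1 - diagonal lam is PSD
  have h1Dps : ((1 : Matrix (Fin n) (Fin n) ℝ) - Matrix.diagonal lam).PosSemidef := by
    have h := h1Mps.conjTranspose_mul_mul_same U
    have heq : Uᴴ * ((1 : Matrix (Fin n) (Fin n) ℝ) - M) * U
        = 1 - Matrix.diagonal lam := by
      rw [Matrix.star_eq_conjTranspose] at hUsU hUUs
      rw [hspec]
      rw [Matrix.star_eq_conjTranspose]
      calc Uᴴ * (1 - U * Matrix.diagonal lam * Uᴴ) * U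
          = Uᴴ * U - (Uᴴ * U) * Matrix.diagonal lam * (Uᴴ * U) := by noncomm_ring
        _ = 1 - Matrix.diagonal lam := by rw [hUsU, one_mul, mul_one]
    rwa [heq] at h
  have hlam' : ∀ i, 1 - lam i = ((1 : Matrix (Fin n) (Fin n) ℝ) - Matrix.diagonal lam) i i := by
    intro i
    simp [Matrix.one_apply, Matrix.diagonal_apply_eq]
  refine ⟨star U * Q, lam, fun i => 1 - lam i, ?_, ?_, ?_, ?_⟩
  · exact ((⟨star U, U, hUsU, hUUs⟩ : (Matrix (Fin n) (Fin n) ℝ)ˣ).isUnit).mul hQunit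
  · intro i
    refine ⟨hMps.eigenvalues_nonneg i, ?_, by ring⟩
    have := Matrix.posSemidef_diagonal_iff.1 (by
      rwa [← Matrix.diagonal_one, Matrix.diagonal_sub] at h1Dps) i
    simpa using this
  · -- W = Pᵀ D P
    have hPt : (star U * Q)ᵀ = Q * U := by
      rw [Matrix.star_eq_conjTranspose, Matrix.conjTranspose_eq_transpose_of_trivial,
        Matrix.transpose_mul, Matrix.transpose_transpose,
        ← Matrix.conjTranspose_eq_transpose_of_trivial, hQH]
    rw [hPt]
    calc W = (Q * R) * W * (R * Q) := by rw [hQR, hRQ, one_mul, mul_one]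
      _ = Q * M * Q := by rw [hMdef]; noncomm_ring
      _ = Q * (U * Matrix.diagonal lam * star U) * Q := by rw [← hspec]
      _ = Q * U * Matrix.diagonal lam * (star U * Q) := by noncomm_ring
  · have hPt : (star U * Q)ᵀ = Q * U := by
      rw [Matrix.star_eq_conjTranspose, Matrix.conjTranspose_eq_transpose_of_trivial,
        Matrix.transpose_mul, Matrix.transpose_transpose,
        ← Matrix.conjTranspose_eq_transpose_of_trivial, hQH]
    rw [hPt]
    have hDlam' : Matrix.diagonal (fun i => 1 - lam i)
        = (1 : Matrix (Fin n) (Fin n) ℝ) - Matrix.diagonal lam := by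
      rw [← Matrix.diagonal_one, Matrix.diagonal_sub]
    rw [hDlam']
    calc T = (Q * R) * T * (R * Q) := by rw [hQR, hRQ, one_mul, mul_one]
      _ = Q * ((1 : Matrix (Fin n) (Fin n) ℝ) - M) * Q := by rw [h1M]; noncomm_ring
      _ = Q * (1 - U * Matrix.diagonal lam * star U) * Q := by rw [← hspec]
      _ = Q * (U * star U - U * Matrix.diagonal lam * star U) * Q := by rw [hUUs]
      _ = Q * U * (1 - Matrix.diagonal lam) * (star U * Q) := by noncomm_ring
end

section
/- Let W ∈ ℝ^{n×n} be symmetric positive definite, T ∈ ℝ^{n×n} symmetric positive semi-definite, α > 0, and let T(α) = (αI + iT)⁻¹(αI − W)(αI + W)⁻¹(αI − iT) (all matrices viewed over ℂ). Then the spectral radius of T(α) satisfies ρ(T(α)) ≤ max over eigenvalues λ of W of |α − λ|/|α + λ|, and in particular ρ(T(α)) < 1. -/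
open Matrix
open scoped Matrix.Norms.L2Operator

namespace StmtSix

variable {n : ℕ}

noncomputable def uconj (P : Matrix (Fin n) (Fin n) ℂ) (f : Fin n → ℂ) :
    Matrix (Fin n) (Fin n) ℂ :=
  P * Matrix.diagonal f * star P

variable {P : Matrix (Fin n) (Fin n) ℂ}

lemma uconj_mul (hP : P ∈ Matrix.unitaryGroup (Fin n) ℂ) (f g : Fin n → ℂ) :
    uconj P f * uconj P g = uconj P (f * g) := by
  simp only [uconj, mul_assoc]
  rw [← mul_assoc (star P) P, Matrix.mem_unitaryGroup_iff'.mp hP, one_mul,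
    ← mul_assoc (diagonal f), Matrix.diagonal_mul_diagonal]
  rfl

lemma uconj_one (hP : P ∈ Matrix.unitaryGroup (Fin n) ℂ) : uconj P 1 = 1 := by
  have h1 : Matrix.diagonal (1 : Fin n → ℂ) = 1 := Matrix.diagonal_one
  rw [uconj, h1, mul_one, Matrix.mem_unitaryGroup_iff.mp hP]

lemma uconj_smul (c : ℂ) (f : Fin n → ℂ) : uconj P (c • f) = c • uconj P f := by
  simp only [uconj, Matrix.diagonal_smul, Matrix.smul_mul, Matrix.mul_smul]

lemma uconj_add (f g : Fin n → ℂ) : uconj P (f + g) = uconj P f + uconj P g := by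
  have h : Matrix.diagonal (f + g) = Matrix.diagonal f + Matrix.diagonal g := by
    rw [Matrix.diagonal_add]; rfl
  simp only [uconj, h, add_mul, mul_add]

lemma uconj_sub (f g : Fin n → ℂ) : uconj P (f - g) = uconj P f - uconj P g := by
  have h : Matrix.diagonal (f - g) = Matrix.diagonal f - Matrix.diagonal g := by
    rw [Matrix.diagonal_sub]; rfl
  simp only [uconj, h, sub_mul, mul_sub]

lemma uconj_smul_one (hP : P ∈ Matrix.unitaryGroup (Fin n) ℂ) (c : ℂ) :
    c • (1 : Matrix (Fin n) (Fin n) ℂ) = uconj P (fun _ => c) := by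
  have : (fun _ : Fin n => c) = c • (1 : Fin n → ℂ) := by
    funext i; simp
  rw [this, uconj_smul, uconj_one hP]

lemma uconj_inv (hP : P ∈ Matrix.unitaryGroup (Fin n) ℂ) (f : Fin n → ℂ)
    (hf : ∀ i, f i ≠ 0) : (uconj P f)⁻¹ = uconj P f⁻¹ := by
  apply Matrix.inv_eq_right_inv
  rw [uconj_mul hP]
  have : f * f⁻¹ = 1 := by funext i; exact mul_inv_cancel₀ (hf i)
  rw [this, uconj_one hP]

lemma uconj_star (f : Fin n → ℂ) : star (uconj P f) = uconj P (star f) := by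
  simp only [uconj, Matrix.star_eq_conjTranspose, Matrix.conjTranspose_mul,
    Matrix.diagonal_conjTranspose, Matrix.conjTranspose_conjTranspose, mul_assoc]

lemma norm_diagonal_le (d : Fin n → ℂ) {m : ℝ} (hm : 0 ≤ m) (hd : ∀ i, ‖d i‖ ≤ m) :
    ‖Matrix.diagonal d‖ ≤ m := by
  rw [Matrix.l2_opNorm_def]
  refine ContinuousLinearMap.opNorm_le_bound _ hm fun x => ?_
  have hx : (((Matrix.toEuclideanLin).trans LinearMap.toContinuousLinearMap)
      (Matrix.diagonal d)) x =
      (WithLp.equiv 2 (Fin n → ℂ)).symm (Matrix.diagonal d *ᵥ (WithLp.equiv 2 (Fin n → ℂ)) x) := by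
    simp [Matrix.toEuclideanLin_apply]
  rw [hx]
  rw [EuclideanSpace.norm_eq, EuclideanSpace.norm_eq]
  rw [← Real.sqrt_sq hm, ← Real.sqrt_mul (sq_nonneg m)]
  apply Real.sqrt_le_sqrt
  rw [Finset.mul_sum]
  apply Finset.sum_le_sum
  intro i _
  have : ‖((WithLp.equiv 2 (Fin n → ℂ)).symm
      (Matrix.diagonal d *ᵥ (WithLp.equiv 2 (Fin n → ℂ)) x)) i‖ = ‖d i * x i‖ := by
    congr 1
    exact Matrix.mulVec_diagonal d _ i
  rw [this, norm_mul]
  calc (‖d i‖ * ‖x i‖) ^ 2 ≤ (m * ‖x i‖) ^ 2 := by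
        gcongr; exact hd i
    _ = m ^ 2 * ‖x i‖ ^ 2 := by ring

lemma complex_decomp {A : Matrix (Fin n) (Fin n) ℝ} (hA : A.IsHermitian) :
    ∃ P ∈ Matrix.unitaryGroup (Fin n) ℂ,
      A.map Complex.ofReal = uconj P (fun i => (hA.eigenvalues i : ℂ)) := by
  set V : Matrix (Fin n) (Fin n) ℝ := (hA.eigenvectorUnitary : Matrix (Fin n) (Fin n) ℝ)
  have hstar : ∀ M : Matrix (Fin n) (Fin n) ℝ,
      (star M).map Complex.ofReal = star (M.map Complex.ofReal) := by
    intro M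
    simp only [Matrix.star_eq_conjTranspose]
    exact Matrix.conjTranspose_map Complex.ofReal (fun a => (Complex.conj_ofReal a).symm)
  have hmul : ∀ M N : Matrix (Fin n) (Fin n) ℝ,
      (M * N).map Complex.ofReal = M.map Complex.ofReal * N.map Complex.ofReal := by
    intro M N
    exact Matrix.map_mul (f := Complex.ofRealHom)
  have hVu : star V * V = 1 := Unitary.coe_star_mul_self hA.eigenvectorUnitary
  refine ⟨V.map Complex.ofReal, ?_, ?_⟩
  · rw [Matrix.mem_unitaryGroup_iff']
    rw [← hstar, ← hmul, hVu]
    simp [Matrix.map_one Complex.ofReal Complex.ofReal_zero Complex.ofReal_one]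
  · have := hA.spectral_theorem
    have h2 : A.map Complex.ofReal = (V * diagonal (RCLike.ofReal ∘ hA.eigenvalues)
        * star V).map Complex.ofReal := congrArg (fun X => X.map Complex.ofReal) this
    have hd : (Matrix.diagonal (RCLike.ofReal ∘ hA.eigenvalues) :
        Matrix (Fin n) (Fin n) ℝ).map Complex.ofReal
        = Matrix.diagonal (fun i => (hA.eigenvalues i : ℂ)) := by
      rw [Matrix.diagonal_map Complex.ofReal_zero]
      congr 1
    rw [h2, hmul, hmul, hstar, hd]
    rfl

end StmtSix

theorem StmtSix.key {n : ℕ} (W T : Matrix (Fin n) (Fin n) ℝ)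
    (hW : W.PosDef) (hT : T.PosSemidef) (α : ℝ) (hα : 0 < α)
    (Tα : Matrix (Fin n) (Fin n) ℂ)
    (hTα : Tα = ((α : ℂ) • 1 + Complex.I • T.map Complex.ofReal)⁻¹ *
        ((α : ℂ) • 1 - W.map Complex.ofReal) * ((α : ℂ) • 1 + W.map Complex.ofReal)⁻¹ *
        ((α : ℂ) • 1 - Complex.I • T.map Complex.ofReal))
    {m : ℝ} (hm : 0 ≤ m)
    (hm' : ∀ i, |α - hW.1.eigenvalues i| / |α + hW.1.eigenvalues i| ≤ m) :
    ∀ μ ∈ spectrum ℂ Tα, ‖μ‖ ≤ m := by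
  intro μ hμ
  rcases Nat.eq_zero_or_pos n with hn | hn
  · subst hn
    haveI : Subsingleton (Matrix (Fin 0) (Fin 0) ℂ) :=
      ⟨fun a b => by ext i j; exact i.elim0⟩
    rw [spectrum.mem_iff] at hμ
    exact absurd (isUnit_of_subsingleton _) hμ
  haveI : Nonempty (Fin n) := ⟨⟨0, hn⟩⟩
  obtain ⟨Pw, hPw, hWc⟩ := StmtSix.complex_decomp hW.1
  obtain ⟨Pt, hPt, hTc⟩ := StmtSix.complex_decomp hT.1
  open StmtSix in
  set lam : Fin n → ℝ := hW.1.eigenvalues with hlam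
  set tau : Fin n → ℝ := hT.1.eigenvalues with htau
  set p : Fin n → ℂ := fun j => (α : ℂ) + Complex.I * (tau j : ℂ) with hpdef
  set q : Fin n → ℂ := fun j => (α : ℂ) - Complex.I * (tau j : ℂ) with hqdef
  set r : Fin n → ℂ := fun i => (α : ℂ) + (lam i : ℂ) with hrdef
  set s : Fin n → ℂ := fun i => (α : ℂ) - (lam i : ℂ) with hsdef
  have hp : ∀ j, p j ≠ 0 := by
    intro j h
    have h2 := congrArg Complex.re h
    rw [hpdef] at h2
    simp [Complex.add_re, Complex.mul_re] at h2
    exact hα.ne' h2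
  have hq : ∀ j, q j ≠ 0 := by
    intro j h
    have h2 := congrArg Complex.re h
    rw [hqdef] at h2
    simp [Complex.sub_re, Complex.mul_re] at h2
    exact hα.ne' h2
  have hr : ∀ i, r i ≠ 0 := by
    intro i
    have hx : (0 : ℝ) < α + lam i := by
      have := hW.eigenvalues_pos i
      positivity
    have : r i = ((α + lam i : ℝ) : ℂ) := by push_cast; ring
    rw [this]
    exact_mod_cast hx.ne'
  -- matrix identities
  have hA : (α : ℂ) • 1 + Complex.I • T.map Complex.ofReal = StmtSix.uconj Pt p := by
    rw [hTc, StmtSix.uconj_smul_one hPt, ← StmtSix.uconj_smul, ← StmtSix.uconj_add]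
    congr 1
  have hC : (α : ℂ) • 1 - Complex.I • T.map Complex.ofReal = StmtSix.uconj Pt q := by
    rw [hTc, StmtSix.uconj_smul_one hPt, ← StmtSix.uconj_smul, ← StmtSix.uconj_sub]
    congr 1
  have hBp : (α : ℂ) • 1 + W.map Complex.ofReal = StmtSix.uconj Pw r := by
    rw [hWc, StmtSix.uconj_smul_one hPw, ← StmtSix.uconj_add]
    congr 1
  have hBm : (α : ℂ) • 1 - W.map Complex.ofReal = StmtSix.uconj Pw s := by
    rw [hWc, StmtSix.uconj_smul_one hPw, ← StmtSix.uconj_sub]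
    congr 1
  have hAinv : ((α : ℂ) • 1 + Complex.I • T.map Complex.ofReal)⁻¹ = StmtSix.uconj Pt p⁻¹ := by
    rw [hA, StmtSix.uconj_inv hPt p hp]
  have hBpinv : ((α : ℂ) • 1 + W.map Complex.ofReal)⁻¹ = StmtSix.uconj Pw r⁻¹ := by
    rw [hBp, StmtSix.uconj_inv hPw r hr]
  set M : Matrix (Fin n) (Fin n) ℂ :=
    StmtSix.uconj Pw (s * r⁻¹) * StmtSix.uconj Pt (q * p⁻¹) with hM
  have h1 : StmtSix.uconj Pt p * StmtSix.uconj Pt p⁻¹ = 1 := by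
    rw [StmtSix.uconj_mul hPt]
    have hppi : p * p⁻¹ = 1 := funext fun j => mul_inv_cancel₀ (hp j)
    rw [hppi, StmtSix.uconj_one hPt]
  have h2 : StmtSix.uconj Pt p⁻¹ * StmtSix.uconj Pt p = 1 := by
    rw [StmtSix.uconj_mul hPt]
    have hppi : p⁻¹ * p = 1 := funext fun j => inv_mul_cancel₀ (hp j)
    rw [hppi, StmtSix.uconj_one hPt]
  set u : (Matrix (Fin n) (Fin n) ℂ)ˣ := ⟨StmtSix.uconj Pt p, StmtSix.uconj Pt p⁻¹, h1, h2⟩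
    with hu
  have hTM : Tα = ((u⁻¹ : (Matrix (Fin n) (Fin n) ℂ)ˣ) : Matrix (Fin n) (Fin n) ℂ) * M
      * (u : Matrix (Fin n) (Fin n) ℂ) := by
    rw [hTα, hAinv, hBpinv, hBm, hC]
    show StmtSix.uconj Pt p⁻¹ * StmtSix.uconj Pw s * StmtSix.uconj Pw r⁻¹ * StmtSix.uconj Pt q
      = StmtSix.uconj Pt p⁻¹ * (StmtSix.uconj Pw (s * r⁻¹) * StmtSix.uconj Pt (q * p⁻¹))
        * StmtSix.uconj Pt p
    have hqp : q * p⁻¹ * p = q := by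
      funext j
      simp only [Pi.mul_apply, Pi.inv_apply]
      exact inv_mul_cancel_right₀ (hp j) (q j)
    rw [mul_assoc (StmtSix.uconj Pt p⁻¹) (StmtSix.uconj Pw s), StmtSix.uconj_mul hPw s r⁻¹,
      mul_assoc (StmtSix.uconj Pt p⁻¹) (StmtSix.uconj Pw (s * r⁻¹)) (StmtSix.uconj Pt q),
      mul_assoc (StmtSix.uconj Pt p⁻¹)
        (StmtSix.uconj Pw (s * r⁻¹) * StmtSix.uconj Pt (q * p⁻¹)) (StmtSix.uconj Pt p),
      mul_assoc (StmtSix.uconj Pw (s * r⁻¹)) (StmtSix.uconj Pt (q * p⁻¹)) (StmtSix.uconj Pt p),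
      StmtSix.uconj_mul hPt (q * p⁻¹) p, hqp]
  rw [hTM, spectrum.units_conjugate'] at hμ
  haveI : Nontrivial (Matrix (Fin n) (Fin n) ℂ) := inferInstance
  have hnorm : ‖μ‖ ≤ ‖M‖ := spectrum.norm_le_norm_of_mem hμ
  have hu2 : StmtSix.uconj Pt (q * p⁻¹) ∈ unitary (Matrix (Fin n) (Fin n) ℂ) := by
    have hstar : star (q * p⁻¹) * (q * p⁻¹) = 1 := by
      funext j
      simp only [Pi.mul_apply, Pi.star_apply, Pi.inv_apply, Pi.one_apply, star_mul',
        star_inv₀]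
      have hq1 : star (q j) = p j := by
        simp only [hqdef, hpdef, RCLike.star_def, map_sub, _root_.map_mul,
          Complex.conj_ofReal, Complex.conj_I]
        ring
      have hp1 : star (p j) = q j := by
        simp only [hqdef, hpdef, RCLike.star_def, map_add, _root_.map_mul,
          Complex.conj_ofReal, Complex.conj_I]
        ring
      rw [hq1, hp1]
      field_simp [hp j, hq j]
    rw [Unitary.mem_iff]
    constructor
    · rw [StmtSix.uconj_star, StmtSix.uconj_mul hPt, hstar, StmtSix.uconj_one hPt]
    · have hstar2 : (q * p⁻¹) * star (q * p⁻¹) = 1 := by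
        rw [mul_comm]
        exact hstar
      rw [StmtSix.uconj_star, StmtSix.uconj_mul hPt, hstar2, StmtSix.uconj_one hPt]
  have e1 : ‖M‖ = ‖StmtSix.uconj Pw (s * r⁻¹)‖ :=
    CStarRing.norm_mul_mem_unitary _ hu2
  have e2 : ‖StmtSix.uconj Pw (s * r⁻¹)‖ = ‖Matrix.diagonal (s * r⁻¹)‖ := by
    rw [StmtSix.uconj, mul_assoc, CStarRing.norm_mem_unitary_mul _ hPw]
    exact CStarRing.norm_mul_mem_unitary _ (Unitary.star_mem hPw)
  have hMn : ‖M‖ ≤ m := by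
    rw [e1, e2]
    apply StmtSix.norm_diagonal_le _ hm
    intro i
    have hcast : (s * r⁻¹) i = ((α - lam i : ℝ) : ℂ) * (((α + lam i : ℝ) : ℂ))⁻¹ := by
      simp only [Pi.mul_apply, Pi.inv_apply]
      push_cast
      ring
    rw [hcast, norm_mul, norm_inv, Complex.norm_real, Complex.norm_real]
    rw [← div_eq_mul_inv]
    simpa [Real.norm_eq_abs] using hm' i
  exact hnorm.trans hMn

theorem stmt_6 {n : ℕ} (W T : Matrix (Fin n) (Fin n) ℝ)
    (hW : W.PosDef) (hT : T.PosSemidef) (α : ℝ) (hα : 0 < α)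
    (Tα : Matrix (Fin n) (Fin n) ℂ)
    (hTα : Tα = ((α : ℂ) • 1 + Complex.I • T.map Complex.ofReal)⁻¹ *
        ((α : ℂ) • 1 - W.map Complex.ofReal) * ((α : ℂ) • 1 + W.map Complex.ofReal)⁻¹ *
        ((α : ℂ) • 1 - Complex.I • T.map Complex.ofReal)) :
    (∀ μ ∈ spectrum ℂ Tα, ‖μ‖ ≤ ⨆ i, |α - hW.1.eigenvalues i| / |α + hW.1.eigenvalues i|) ∧
      (∀ μ ∈ spectrum ℂ Tα, ‖μ‖ < 1) := by
  have hratio : ∀ i, 0 ≤ |α - hW.1.eigenvalues i| / |α + hW.1.eigenvalues i| := by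
    intro i
    positivity
  constructor
  · intro μ hμ
    have hbdd : BddAbove (Set.range fun i =>
        |α - hW.1.eigenvalues i| / |α + hW.1.eigenvalues i|) :=
      (Set.finite_range _).bddAbove
    have hm0 : 0 ≤ ⨆ i, |α - hW.1.eigenvalues i| / |α + hW.1.eigenvalues i| := by
      rcases Nat.eq_zero_or_pos n with h0 | hn
      · subst h0
        rw [Real.iSup_of_isEmpty]
      · haveI : Nonempty (Fin n) := ⟨⟨0, hn⟩⟩
        exact (hratio (Classical.arbitrary _)).trans (le_ciSup hbdd _)
    exact StmtSix.key W T hW hT α hα Tα hTα hm0 (fun i => le_ciSup hbdd i) μ hμ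
  · intro μ hμ
    rcases Nat.eq_zero_or_pos n with h0 | hn
    · subst h0
      haveI : Subsingleton (Matrix (Fin 0) (Fin 0) ℂ) :=
        ⟨fun a b => by ext i j; exact i.elim0⟩
      rw [spectrum.mem_iff] at hμ
      exact absurd (isUnit_of_subsingleton _) hμ
    haveI : Nonempty (Fin n) := ⟨⟨0, hn⟩⟩
    obtain ⟨i0, hi0⟩ := Finite.exists_max
      (fun i => |α - hW.1.eigenvalues i| / |α + hW.1.eigenvalues i|)
    have hpos : 0 < α + hW.1.eigenvalues i0 := by
      have := hW.eigenvalues_pos i0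
      positivity
    have hlt : |α - hW.1.eigenvalues i0| / |α + hW.1.eigenvalues i0| < 1 := by
      rw [div_lt_one (by rwa [abs_of_pos hpos])]
      rw [abs_of_pos hpos]
      have := hW.eigenvalues_pos i0
      rw [abs_lt]
      constructor <;> linarith
    exact lt_of_le_of_lt
      (StmtSix.key W T hW hT α hα Tα hTα (hratio i0) (fun i => hi0 i) μ hμ) hlt
end

section
/- Let W ∈ ℝ^{n×n} be symmetric positive definite, T ∈ ℝ^{n×n} symmetric positive semi-definite, A = W + iT nonsingular, α > 0 and 0 ≤ ω < 2. Then the GADI iteration x^{(k+1/2)} = (αI + W)⁻¹[(αI − iT)x^{(k)} + b], x^{(k+1)} = (αI + iT)⁻¹[(iT − (1−ω)αI)x^{(k)} + (2−ω)α x^{(k+1/2)}] converges for any initial vector x^{(0)} to the unique solution x of Ax = b. -/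
open Matrix Complex

variable {n : ℕ}

lemma gadi_map_herm {M : Matrix (Fin n) (Fin n) ℝ} (hM : M.IsHermitian) :
    (M.map Complex.ofReal).IsHermitian := by
  have h := hM.eq
  ext i j
  have : M j i = M i j := by
    conv_lhs => rw [← h]
    rfl
  simp [Matrix.conjTranspose_apply, Matrix.map_apply, this]

/-- Hermitian matrices have real quadratic form -/
lemma gadi_herm_real {M : Matrix (Fin n) (Fin n) ℂ} (hM : M.IsHermitian)
    (v : Fin n → ℂ) : (starRingEnd ℂ) (star v ⬝ᵥ (M *ᵥ v)) = star v ⬝ᵥ (M *ᵥ v) := by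
  calc (starRingEnd ℂ) (star v ⬝ᵥ (M *ᵥ v)) = star (star v ⬝ᵥ (M *ᵥ v)) := rfl
    _ = star (M *ᵥ v) ⬝ᵥ v := by conv_lhs => rw [Matrix.star_dotProduct, star_star]
    _ = (star v ᵥ* Mᴴ) ⬝ᵥ v := by rw [Matrix.star_mulVec]
    _ = (star v ᵥ* M) ⬝ᵥ v := by rw [hM.eq]
    _ = star v ⬝ᵥ (M *ᵥ v) := (Matrix.dotProduct_mulVec _ _ _).symm

lemma gadi_herm_im {M : Matrix (Fin n) (Fin n) ℂ} (hM : M.IsHermitian)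
    (v : Fin n → ℂ) : (star v ⬝ᵥ (M *ᵥ v)).im = 0 := by
  have h2 := congrArg Complex.im (gadi_herm_real hM v)
  rw [Complex.conj_im] at h2
  linarith

lemma gadi_re_quad (M : Matrix (Fin n) (Fin n) ℝ) (v : Fin n → ℂ) :
    (star v ⬝ᵥ (M.map Complex.ofReal *ᵥ v)).re =
      (fun i => (v i).re) ⬝ᵥ (M *ᵥ fun i => (v i).re) +
      (fun i => (v i).im) ⬝ᵥ (M *ᵥ fun i => (v i).im) := by
  simp only [dotProduct, Matrix.mulVec, Matrix.map_apply, Pi.star_apply, RCLike.star_def]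
  rw [← Finset.sum_add_distrib, Complex.re_sum]
  refine Finset.sum_congr rfl fun i _ => ?_
  rw [Finset.mul_sum, Finset.mul_sum, Finset.mul_sum, Complex.re_sum, ← Finset.sum_add_distrib]
  refine Finset.sum_congr rfl fun j _ => ?_
  simp [Complex.mul_re, Complex.mul_im]

lemma gadi_psd_re {M : Matrix (Fin n) (Fin n) ℝ} (hM : M.PosSemidef) (v : Fin n → ℂ) :
    0 ≤ (star v ⬝ᵥ (M.map Complex.ofReal *ᵥ v)).re := by
  rw [gadi_re_quad]
  have h1 := hM.dotProduct_mulVec_nonneg (fun i => (v i).re)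
  have h2 := hM.dotProduct_mulVec_nonneg (fun i => (v i).im)
  simp only [star_trivial] at h1 h2
  linarith

lemma gadi_pd_re {M : Matrix (Fin n) (Fin n) ℝ} (hM : M.PosDef) {v : Fin n → ℂ} (hv : v ≠ 0) :
    0 < (star v ⬝ᵥ (M.map Complex.ofReal *ᵥ v)).re := by
  rw [gadi_re_quad]
  by_cases ha : (fun i => (v i).re) = 0
  · have hb : (fun i => (v i).im) ≠ 0 := by
      intro hb
      apply hv
      funext i
      exact Complex.ext (congrFun ha i) (congrFun hb i)
    have h2 := hM.dotProduct_mulVec_pos hb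
    simp only [star_trivial] at h2
    have h1 : (fun i => (v i).re) ⬝ᵥ (M *ᵥ fun i => (v i).re) = 0 := by
      rw [ha]; simp
    linarith
  · have h1 := hM.dotProduct_mulVec_pos ha
    have h2 := hM.posSemidef.dotProduct_mulVec_nonneg (fun i => (v i).im)
    simp only [star_trivial] at h1 h2
    linarith

lemma gadi_norm_sq_expand (M : Matrix (Fin n) (Fin n) ℂ) (α : ℝ) (c : ℂ) (v : Fin n → ℂ) :
    ‖(WithLp.equiv 2 (Fin n → ℂ)).symm ((((α : ℂ) • (1 : Matrix (Fin n) (Fin n) ℂ) + c • M) *ᵥ v))‖ ^ 2 =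
      α ^ 2 * ‖(WithLp.equiv 2 (Fin n → ℂ)).symm v‖ ^ 2
        + ‖c‖ ^ 2 * ‖(WithLp.equiv 2 (Fin n → ℂ)).symm (M *ᵥ v)‖ ^ 2
        + 2 * α * (c.re * (star v ⬝ᵥ (M *ᵥ v)).re - c.im * (star v ⬝ᵥ (M *ᵥ v)).im) := by
  have hv : (((α : ℂ) • (1 : Matrix (Fin n) (Fin n) ℂ) + c • M)) *ᵥ v
      = (α : ℂ) • v + c • (M *ᵥ v) := by
    rw [Matrix.add_mulVec, Matrix.smul_mulVec, Matrix.smul_mulVec, Matrix.one_mulVec]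
  rw [hv, WithLp.equiv_symm_apply, WithLp.toLp_add, WithLp.toLp_smul, WithLp.toLp_smul]
  rw [norm_add_sq (𝕜 := ℂ), inner_smul_left, inner_smul_right,
    EuclideanSpace.inner_toLp_toLp, norm_smul, norm_smul]
  simp only [Complex.norm_real, RCLike.norm_ofNat, Complex.conj_ofReal]
  rw [mul_pow, mul_pow]
  simp only [RCLike.re_to_complex, Complex.mul_re, Complex.ofReal_re, Complex.ofReal_im,
    Real.norm_eq_abs]
  rw [_root_.sq_abs α, dotProduct_comm (M *ᵥ v) (star v)]
  ring

lemma gadi_normP_sq (Wc : Matrix (Fin n) (Fin n) ℂ) (α : ℝ) (v : Fin n → ℂ) :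
    ‖(WithLp.equiv 2 (Fin n → ℂ)).symm (((α : ℂ) • (1 : Matrix (Fin n) (Fin n) ℂ) + Wc) *ᵥ v)‖ ^ 2 =
      α ^ 2 * ‖(WithLp.equiv 2 (Fin n → ℂ)).symm v‖ ^ 2
        + ‖(WithLp.equiv 2 (Fin n → ℂ)).symm (Wc *ᵥ v)‖ ^ 2
        + 2 * α * (star v ⬝ᵥ (Wc *ᵥ v)).re := by
  have := gadi_norm_sq_expand Wc α 1 v
  simpa using this

lemma gadi_normM_sq (Wc : Matrix (Fin n) (Fin n) ℂ) (α : ℝ) (v : Fin n → ℂ) :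
    ‖(WithLp.equiv 2 (Fin n → ℂ)).symm (((α : ℂ) • (1 : Matrix (Fin n) (Fin n) ℂ) - Wc) *ᵥ v)‖ ^ 2 =
      α ^ 2 * ‖(WithLp.equiv 2 (Fin n → ℂ)).symm v‖ ^ 2
        + ‖(WithLp.equiv 2 (Fin n → ℂ)).symm (Wc *ᵥ v)‖ ^ 2
        - 2 * α * (star v ⬝ᵥ (Wc *ᵥ v)).re := by
  have := gadi_norm_sq_expand Wc α (-1) v
  rw [show (α : ℂ) • (1 : Matrix (Fin n) (Fin n) ℂ) - Wc
      = (α : ℂ) • (1 : Matrix (Fin n) (Fin n) ℂ) + (-1 : ℂ) • Wc by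
    rw [neg_one_smul]; exact sub_eq_add_neg _ _]
  rw [this]
  simp
  ring

lemma gadi_normQ_sq {Tc : Matrix (Fin n) (Fin n) ℂ} (hTc : Tc.IsHermitian) (α : ℝ) (v : Fin n → ℂ) :
    ‖(WithLp.equiv 2 (Fin n → ℂ)).symm
        (((α : ℂ) • (1 : Matrix (Fin n) (Fin n) ℂ) + Complex.I • Tc) *ᵥ v)‖ ^ 2 =
      α ^ 2 * ‖(WithLp.equiv 2 (Fin n → ℂ)).symm v‖ ^ 2
        + ‖(WithLp.equiv 2 (Fin n → ℂ)).symm (Tc *ᵥ v)‖ ^ 2 := by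
  have := gadi_norm_sq_expand Tc α Complex.I v
  rw [this, gadi_herm_im hTc]
  simp

lemma gadi_normS_sq {Tc : Matrix (Fin n) (Fin n) ℂ} (hTc : Tc.IsHermitian) (α : ℝ) (v : Fin n → ℂ) :
    ‖(WithLp.equiv 2 (Fin n → ℂ)).symm
        (((α : ℂ) • (1 : Matrix (Fin n) (Fin n) ℂ) - Complex.I • Tc) *ᵥ v)‖ ^ 2 =
      α ^ 2 * ‖(WithLp.equiv 2 (Fin n → ℂ)).symm v‖ ^ 2
        + ‖(WithLp.equiv 2 (Fin n → ℂ)).symm (Tc *ᵥ v)‖ ^ 2 := by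
  have := gadi_norm_sq_expand Tc α (-Complex.I) v
  rw [show (α : ℂ) • (1 : Matrix (Fin n) (Fin n) ℂ) - Complex.I • Tc
      = (α : ℂ) • (1 : Matrix (Fin n) (Fin n) ℂ) + (-Complex.I) • Tc by
    rw [neg_smul]; exact sub_eq_add_neg _ _]
  rw [this, gadi_herm_im hTc]
  simp

lemma gadi_le_of_sq_le {a b : ℝ} (ha : 0 ≤ a) (hb : 0 ≤ b) (h : a ^ 2 ≤ b ^ 2) : a ≤ b := by
  nlinarith

lemma gadi_eq_of_sq_eq {a b : ℝ} (ha : 0 ≤ a) (hb : 0 ≤ b) (h : a ^ 2 = b ^ 2) : a = b := by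
  nlinarith

lemma gadi_theta (W : Matrix (Fin n) (Fin n) ℝ) (hW : W.PosDef) (α : ℝ) (hα : 0 < α) :
    ∃ θ : ℝ, 0 ≤ θ ∧ θ < 1 ∧ ∀ v : Fin n → ℂ,
      ‖(WithLp.equiv 2 (Fin n → ℂ)).symm
          (((α : ℂ) • (1 : Matrix (Fin n) (Fin n) ℂ) - W.map Complex.ofReal) *ᵥ v)‖
        ≤ θ * ‖(WithLp.equiv 2 (Fin n → ℂ)).symm
          (((α : ℂ) • (1 : Matrix (Fin n) (Fin n) ℂ) + W.map Complex.ofReal) *ᵥ v)‖ := by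
  set Wc := W.map Complex.ofReal with hWcdef
  set toE := (WithLp.equiv 2 (Fin n → ℂ)).symm with htoE
  have h0E : toE (0 : Fin n → ℂ) = 0 := rfl
  have htoEne : ∀ v : Fin n → ℂ, v ≠ 0 → toE v ≠ 0 := by
    intro v hv h
    exact hv (by simpa [htoE, WithLp.equiv_symm_apply] using h)
  rcases Nat.eq_zero_or_pos n with hn | hn
  · subst hn
    refine ⟨0, le_refl _, one_pos, fun v => ?_⟩
    have hv : v = 0 := funext fun i => i.elim0
    rw [hv, Matrix.mulVec_zero, Matrix.mulVec_zero, h0E]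
    simp
  have hPlow : ∀ v : Fin n → ℂ,
      α * ‖toE v‖ ≤ ‖toE (((α : ℂ) • (1 : Matrix (Fin n) (Fin n) ℂ) + Wc) *ᵥ v)‖ := by
    intro v
    have h := gadi_normP_sq Wc α v
    have hq := gadi_psd_re hW.posSemidef v
    refine gadi_le_of_sq_le (mul_nonneg hα.le (norm_nonneg _)) (norm_nonneg _) ?_
    rw [mul_pow, h]
    nlinarith [norm_nonneg (toE (Wc *ᵥ v)), sq_nonneg (‖toE (Wc *ᵥ v)‖)]
  have hPpos : ∀ v : Fin n → ℂ, v ≠ 0 →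
      0 < ‖toE (((α : ℂ) • (1 : Matrix (Fin n) (Fin n) ℂ) + Wc) *ᵥ v)‖ := by
    intro v hv
    have h2 : 0 < ‖toE v‖ := norm_pos_iff.mpr (htoEne v hv)
    exact lt_of_lt_of_le (mul_pos hα h2) (hPlow v)
  have hlt : ∀ v : Fin n → ℂ, v ≠ 0 →
      ‖toE (((α : ℂ) • (1 : Matrix (Fin n) (Fin n) ℂ) - Wc) *ᵥ v)‖
        < ‖toE (((α : ℂ) • (1 : Matrix (Fin n) (Fin n) ℂ) + Wc) *ᵥ v)‖ := by
    intro v hv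
    have h1 := gadi_normP_sq Wc α v
    have h2 := gadi_normM_sq Wc α v
    have hq := gadi_pd_re hW hv
    have hsq : ‖toE (((α : ℂ) • (1 : Matrix (Fin n) (Fin n) ℂ) - Wc) *ᵥ v)‖ ^ 2
        < ‖toE (((α : ℂ) • (1 : Matrix (Fin n) (Fin n) ℂ) + Wc) *ᵥ v)‖ ^ 2 := by
      rw [h1, h2]; nlinarith
    have hb := norm_nonneg (toE (((α : ℂ) • (1 : Matrix (Fin n) (Fin n) ℂ) - Wc) *ᵥ v))
    nlinarith [hPpos v hv]
  set LP : EuclideanSpace ℂ (Fin n) →L[ℂ] EuclideanSpace ℂ (Fin n) :=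
    (Matrix.toEuclideanLin ((α : ℂ) • (1 : Matrix (Fin n) (Fin n) ℂ) + Wc)).toContinuousLinearMap
    with hLPdef
  set LM : EuclideanSpace ℂ (Fin n) →L[ℂ] EuclideanSpace ℂ (Fin n) :=
    (Matrix.toEuclideanLin ((α : ℂ) • (1 : Matrix (Fin n) (Fin n) ℂ) - Wc)).toContinuousLinearMap
    with hLMdef
  have hLP : ∀ v : Fin n → ℂ, LP (toE v)
      = toE (((α : ℂ) • (1 : Matrix (Fin n) (Fin n) ℂ) + Wc) *ᵥ v) := fun v =>
    Matrix.toEuclideanLin_apply_piLp_toLp _ v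
  have hLM : ∀ v : Fin n → ℂ, LM (toE v)
      = toE (((α : ℂ) • (1 : Matrix (Fin n) (Fin n) ℂ) - Wc) *ᵥ v) := fun v =>
    Matrix.toEuclideanLin_apply_piLp_toLp _ v
  have hsurj : ∀ u : EuclideanSpace ℂ (Fin n), u = toE (WithLp.equiv 2 (Fin n → ℂ) u) :=
    fun u => rfl
  have hune : ∀ u : EuclideanSpace ℂ (Fin n), u ∈ Metric.sphere (0 : EuclideanSpace ℂ (Fin n)) 1 →
      WithLp.equiv 2 (Fin n → ℂ) u ≠ 0 := by
    intro u hu h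
    have h2 : u = 0 := by simpa using congrArg (WithLp.equiv 2 (Fin n → ℂ)).symm h
    rw [h2] at hu
    simp at hu
  set g : EuclideanSpace ℂ (Fin n) → ℝ := fun u => ‖LM u‖ / ‖LP u‖ with hg
  have hsne : (Metric.sphere (0 : EuclideanSpace ℂ (Fin n)) 1).Nonempty := by
    refine ⟨EuclideanSpace.single ⟨0, hn⟩ (1 : ℂ), ?_⟩
    simp [EuclideanSpace.norm_single]
  have hcont : ContinuousOn g (Metric.sphere (0 : EuclideanSpace ℂ (Fin n)) 1) := by
    apply ContinuousOn.div
    · exact (LM.continuous.norm).continuousOn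
    · exact (LP.continuous.norm).continuousOn
    · intro u hu
      rw [hsurj u, hLP]
      exact (hPpos _ (hune u hu)).ne'
  obtain ⟨u0, hu0mem, hmax⟩ :=
    (isCompact_sphere (0 : EuclideanSpace ℂ (Fin n)) 1).exists_isMaxOn hsne hcont
  refine ⟨g u0, div_nonneg (norm_nonneg _) (norm_nonneg _), ?_, ?_⟩
  · have hP0 : 0 < ‖LP u0‖ := by
      rw [hsurj u0, hLP]
      exact hPpos _ (hune u0 hu0mem)
    rw [hg]
    simp only
    rw [div_lt_one hP0, hsurj u0, hLP, hLM]
    exact hlt _ (hune u0 hu0mem)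
  · intro v
    by_cases hv : v = 0
    · rw [hv, Matrix.mulVec_zero, Matrix.mulVec_zero, h0E]
      simp only [norm_zero, mul_zero]
      exact le_refl 0
    · have hnv : 0 < ‖toE v‖ := norm_pos_iff.mpr (htoEne v hv)
      set u : EuclideanSpace ℂ (Fin n) := (‖toE v‖)⁻¹ • toE v with hu
      have humem : u ∈ Metric.sphere (0 : EuclideanSpace ℂ (Fin n)) 1 := by
        simp only [mem_sphere_iff_norm, sub_zero, hu, norm_smul, norm_inv, norm_norm]
        rw [inv_mul_cancel₀ hnv.ne']
      have hle : g u ≤ g u0 := hmax humem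
      have hMu : ‖LM u‖
          = (‖toE v‖)⁻¹ * ‖toE (((α : ℂ) • (1 : Matrix (Fin n) (Fin n) ℂ) - Wc) *ᵥ v)‖ := by
        rw [hu, ContinuousLinearMap.map_smul_of_tower, norm_smul, hLM,
          Real.norm_eq_abs, _root_.abs_of_nonneg (inv_nonneg.mpr hnv.le)]
      have hPu : ‖LP u‖
          = (‖toE v‖)⁻¹ * ‖toE (((α : ℂ) • (1 : Matrix (Fin n) (Fin n) ℂ) + Wc) *ᵥ v)‖ := by
        rw [hu, ContinuousLinearMap.map_smul_of_tower, norm_smul, hLP,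
          Real.norm_eq_abs, _root_.abs_of_nonneg (inv_nonneg.mpr hnv.le)]
      have hPupos : 0 < ‖LP u‖ := by
        rw [hPu]
        exact mul_pos (inv_pos.mpr hnv) (hPpos v hv)
      rw [hg] at hle
      simp only at hle
      rw [div_le_iff₀ hPupos, hMu, hPu] at hle
      have hfinal := mul_le_mul_of_nonneg_left hle hnv.le
      rw [← mul_assoc, mul_inv_cancel₀ hnv.ne', one_mul] at hfinal
      calc ‖toE (((α : ℂ) • (1 : Matrix (Fin n) (Fin n) ℂ) - Wc) *ᵥ v)‖
          ≤ ‖toE v‖ * (g u0 * ((‖toE v‖)⁻¹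
              * ‖toE (((α : ℂ) • (1 : Matrix (Fin n) (Fin n) ℂ) + Wc) *ᵥ v)‖)) := hfinal
        _ = g u0 * ‖toE (((α : ℂ) • (1 : Matrix (Fin n) (Fin n) ℂ) + Wc) *ᵥ v)‖ := by
            field_simp
open Matrix in
theorem stmt_11 {n : ℕ} (W T : Matrix (Fin n) (Fin n) ℝ)
    (hW : W.PosDef) (hT : T.PosSemidef)
    (A : Matrix (Fin n) (Fin n) ℂ)
    (hA : A = W.map Complex.ofReal + Complex.I • T.map Complex.ofReal)
    (hAinv : IsUnit A)
    (α ω : ℝ) (hα : 0 < α) (hω : 0 ≤ ω) (hω2 : ω < 2)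
    (b : Fin n → ℂ) (x : ℕ → Fin n → ℂ)
    (hrec : ∀ k, x (k + 1) =
      ((α : ℂ) • (1 : Matrix (Fin n) (Fin n) ℂ) + Complex.I • T.map Complex.ofReal)⁻¹ *ᵥ
        ((Complex.I • T.map Complex.ofReal
            - (((1 - ω : ℝ) : ℂ) * (α : ℂ)) • (1 : Matrix (Fin n) (Fin n) ℂ)) *ᵥ x k
          + (((2 - ω : ℝ) : ℂ) * (α : ℂ)) •
            (((α : ℂ) • (1 : Matrix (Fin n) (Fin n) ℂ) + W.map Complex.ofReal)⁻¹ *ᵥ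
              (((α : ℂ) • (1 : Matrix (Fin n) (Fin n) ℂ)
                  - Complex.I • T.map Complex.ofReal) *ᵥ x k + b)))) :
    Filter.Tendsto x Filter.atTop (nhds (A⁻¹ *ᵥ b)) := by
  classical
  rcases Nat.eq_zero_or_pos n with hn | hn
  · subst hn
    have hx : x = fun _ => A⁻¹ *ᵥ b := funext fun k => funext fun i => i.elim0
    rw [hx]
    exact tendsto_const_nhds
  set Wc := W.map Complex.ofReal with hWc
  set Tc := T.map Complex.ofReal with hTcdef
  set toE := (WithLp.equiv 2 (Fin n → ℂ)).symm with htoE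
  set P := (α : ℂ) • (1 : Matrix (Fin n) (Fin n) ℂ) + Wc with hPdef
  set Q := (α : ℂ) • (1 : Matrix (Fin n) (Fin n) ℂ) + Complex.I • Tc with hQdef
  set S := (α : ℂ) • (1 : Matrix (Fin n) (Fin n) ℂ) - Complex.I • Tc with hSdef
  set R := Complex.I • Tc - (((1 - ω : ℝ) : ℂ) * (α : ℂ)) • (1 : Matrix (Fin n) (Fin n) ℂ)
    with hRdef
  set c2 := ((2 - ω : ℝ) : ℂ) * (α : ℂ) with hc2def
  set c3 := ((ω / 2 : ℝ) : ℂ) with hc3def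
  set c4 := ((1 - ω / 2 : ℝ) : ℂ) with hc4def
  have hTcH : Tc.IsHermitian := gadi_map_herm hT.1
  have htoEne : ∀ v : Fin n → ℂ, v ≠ 0 → toE v ≠ 0 := by
    intro v hv h
    exact hv (by simpa [htoE, WithLp.equiv_symm_apply] using h)
  -- invertibility of Q
  have hQlow : ∀ v : Fin n → ℂ, α * ‖toE v‖ ≤ ‖toE (Q *ᵥ v)‖ := by
    intro v
    have h := gadi_normQ_sq hTcH α v
    refine gadi_le_of_sq_le (mul_nonneg hα.le (norm_nonneg _)) (norm_nonneg _) ?_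
    rw [mul_pow, ← hQdef] at *
    rw [h]
    nlinarith [sq_nonneg (‖toE (Tc *ᵥ v)‖)]
  have hQdet : IsUnit Q.det := by
    rw [isUnit_iff_ne_zero]
    intro h0
    obtain ⟨v, hvne, hv⟩ := (Matrix.exists_mulVec_eq_zero_iff).mpr h0
    have h1 := hQlow v
    rw [hv] at h1
    have h2 : 0 < ‖toE v‖ := norm_pos_iff.mpr (htoEne v hvne)
    have h3 : toE (0 : Fin n → ℂ) = 0 := rfl
    rw [h3, norm_zero] at h1
    nlinarith
  have hPlow : ∀ v : Fin n → ℂ, α * ‖toE v‖ ≤ ‖toE (P *ᵥ v)‖ := by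
    intro v
    have h := gadi_normP_sq Wc α v
    have hq := gadi_psd_re hW.posSemidef v
    refine gadi_le_of_sq_le (mul_nonneg hα.le (norm_nonneg _)) (norm_nonneg _) ?_
    rw [mul_pow, ← hPdef] at *
    rw [h]
    nlinarith [sq_nonneg (‖toE (Wc *ᵥ v)‖)]
  have hPdet : IsUnit P.det := by
    rw [isUnit_iff_ne_zero]
    intro h0
    obtain ⟨v, hvne, hv⟩ := (Matrix.exists_mulVec_eq_zero_iff).mpr h0
    have h1 := hPlow v
    rw [hv] at h1
    have h2 : 0 < ‖toE v‖ := norm_pos_iff.mpr (htoEne v hvne)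
    have h3 : toE (0 : Fin n → ℂ) = 0 := rfl
    rw [h3, norm_zero] at h1
    nlinarith
  have hQQ : Q * Q⁻¹ = 1 := Matrix.mul_nonsing_inv _ hQdet
  have hPP : P * P⁻¹ = 1 := Matrix.mul_nonsing_inv _ hPdet
  have hPU : IsUnit P := (Matrix.isUnit_iff_isUnit_det _).mpr hPdet
  set xs := A⁻¹ *ᵥ b with hxs
  have hax : A *ᵥ xs = b := by
    rw [hxs, Matrix.mulVec_mulVec, Matrix.mul_nonsing_inv _
      ((Matrix.isUnit_iff_isUnit_det A).mp hAinv), Matrix.one_mulVec]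
  have hPS : P = S + A := by
    rw [hPdef, hSdef, hA]
    abel
  -- fixed point equation
  have hfix : Q *ᵥ xs = R *ᵥ xs + c2 • (P⁻¹ *ᵥ (S *ᵥ xs + b)) := by
    have h1 : S *ᵥ xs + b = P *ᵥ xs := by
      conv_rhs => rw [hPS, Matrix.add_mulVec, hax]
    have h4 : P⁻¹ *ᵥ (P *ᵥ xs) = xs := by
      rw [Matrix.mulVec_mulVec, Matrix.nonsing_inv_mul _ hPdet, Matrix.one_mulVec]
    rw [h1, h4]
    have hQR : Q = R + c2 • (1 : Matrix (Fin n) (Fin n) ℂ) := by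
      rw [hQdef, hRdef, hc2def]
      push_cast
      module
    rw [hQR, Matrix.add_mulVec, Matrix.smul_mulVec, Matrix.one_mulVec]
  -- iteration in Q-form
  have hQx : ∀ k, Q *ᵥ x (k + 1) = R *ᵥ x k + c2 • (P⁻¹ *ᵥ (S *ᵥ x k + b)) := by
    intro k
    rw [hrec k, Matrix.mulVec_mulVec, hQQ, Matrix.one_mulVec]
  set e : ℕ → Fin n → ℂ := fun k => x k - xs with hedef
  have hQe : ∀ k, Q *ᵥ e (k + 1) = R *ᵥ e k + c2 • (P⁻¹ *ᵥ (S *ᵥ e k)) := by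
    intro k
    have h1 : Q *ᵥ e (k + 1) = Q *ᵥ x (k + 1) - Q *ᵥ xs := by
      rw [hedef]
      exact Matrix.mulVec_sub _ _ _
    rw [h1, hQx k, hfix]
    have h2 : ∀ M : Matrix (Fin n) (Fin n) ℂ, ∀ u w : Fin n → ℂ,
        M *ᵥ (u - w) = M *ᵥ u - M *ᵥ w := fun M u w => Matrix.mulVec_sub _ _ _
    rw [hedef]
    simp only [h2, Matrix.mulVec_add]
    module
  -- commutation
  have hcomm : P * ((α : ℂ) • (1 : Matrix (Fin n) (Fin n) ℂ) - Wc)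
      = ((α : ℂ) • (1 : Matrix (Fin n) (Fin n) ℂ) - Wc) * P := by
    rw [hPdef]
    simp only [Matrix.add_mul, Matrix.mul_add, Matrix.sub_mul, Matrix.mul_sub,
      Matrix.smul_mul, Matrix.mul_smul, Matrix.one_mul, Matrix.mul_one]
    module
  -- key matrix identity
  have hD : R + c2 • (P⁻¹ * S)
      = c3 • Q + c4 • (((α : ℂ) • (1 : Matrix (Fin n) (Fin n) ℂ) - Wc) * P⁻¹ * S) := by
    apply hPU.mul_left_cancel
    have hassoc : P * (((α : ℂ) • (1 : Matrix (Fin n) (Fin n) ℂ) - Wc) * P⁻¹ * S)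
        = ((α : ℂ) • (1 : Matrix (Fin n) (Fin n) ℂ) - Wc) * S := by
      rw [← Matrix.mul_assoc, ← Matrix.mul_assoc, hcomm,
        Matrix.mul_assoc (((α : ℂ) • (1 : Matrix (Fin n) (Fin n) ℂ) - Wc)) P P⁻¹, hPP,
        Matrix.mul_one]
    rw [Matrix.mul_add, Matrix.mul_add, Matrix.mul_smul, Matrix.mul_smul, Matrix.mul_smul,
      ← Matrix.mul_assoc P P⁻¹ S, hPP, Matrix.one_mul, hassoc]
    rw [hPdef, hQdef, hRdef, hSdef, hc2def, hc3def, hc4def]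
    simp only [Matrix.add_mul, Matrix.mul_add, Matrix.sub_mul, Matrix.mul_sub,
      Matrix.smul_mul, Matrix.mul_smul, Matrix.one_mul, Matrix.mul_one, smul_smul]
    push_cast
    module
  -- vector error recurrence
  have hvec : ∀ k, Q *ᵥ e (k + 1)
      = c3 • (Q *ᵥ e k)
        + c4 • ((((α : ℂ) • (1 : Matrix (Fin n) (Fin n) ℂ) - Wc)) *ᵥ (P⁻¹ *ᵥ (S *ᵥ e k))) := by
    intro k
    rw [hQe k]
    have h1 : R *ᵥ e k + c2 • (P⁻¹ *ᵥ (S *ᵥ e k))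
        = (R + c2 • (P⁻¹ * S)) *ᵥ e k := by
      rw [Matrix.add_mulVec, Matrix.smul_mulVec, Matrix.mulVec_mulVec]
    rw [h1, hD, Matrix.add_mulVec, Matrix.smul_mulVec, Matrix.smul_mulVec,
      ← Matrix.mulVec_mulVec, ← Matrix.mulVec_mulVec]
  -- norm equality between S and Q
  have hSQ : ∀ v : Fin n → ℂ, ‖toE (S *ᵥ v)‖ = ‖toE (Q *ᵥ v)‖ := by
    intro v
    refine gadi_eq_of_sq_eq (norm_nonneg _) (norm_nonneg _) ?_
    rw [hSdef, hQdef, gadi_normS_sq hTcH, gadi_normQ_sq hTcH]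
  -- contraction factor
  obtain ⟨θ, hθ0, hθ1, hθ⟩ := gadi_theta W hW α hα
  set r : ℝ := ω / 2 + (1 - ω / 2) * θ with hrdef
  have hr0 : 0 ≤ r := by
    rw [hrdef]
    have : 0 ≤ (1 - ω / 2) * θ := mul_nonneg (by linarith) hθ0
    linarith
  have hr1 : r < 1 := by
    rw [hrdef]
    nlinarith
  set g : ℕ → ℝ := fun k => ‖toE (Q *ᵥ e k)‖ with hgdef
  have hcontract : ∀ k, g (k + 1) ≤ r * g k := by
    intro k
    have h1 : g (k + 1) = ‖c3 • toE (Q *ᵥ e k)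
        + c4 • toE ((((α : ℂ) • (1 : Matrix (Fin n) (Fin n) ℂ) - Wc)) *ᵥ (P⁻¹ *ᵥ (S *ᵥ e k)))‖ := by
      rw [hgdef]
      simp only
      rw [hvec k]
      rfl
    have h2 : ‖toE ((((α : ℂ) • (1 : Matrix (Fin n) (Fin n) ℂ) - Wc)) *ᵥ (P⁻¹ *ᵥ (S *ᵥ e k)))‖
        ≤ θ * g k := by
      have h3 := hθ (P⁻¹ *ᵥ (S *ᵥ e k))
      rw [← hWc, ← hPdef] at h3
      have h4 : P *ᵥ (P⁻¹ *ᵥ (S *ᵥ e k)) = S *ᵥ e k := by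
        rw [Matrix.mulVec_mulVec, hPP, Matrix.one_mulVec]
      rw [h4] at h3
      calc ‖toE ((((α : ℂ) • (1 : Matrix (Fin n) (Fin n) ℂ) - Wc)) *ᵥ (P⁻¹ *ᵥ (S *ᵥ e k)))‖
          ≤ θ * ‖toE (S *ᵥ e k)‖ := h3
        _ = θ * g k := by rw [hSQ (e k)]
    have hc3n : ‖c3‖ = ω / 2 := by
      rw [hc3def, Complex.norm_real, Real.norm_eq_abs, _root_.abs_of_nonneg (by linarith)]
    have hc4n : ‖c4‖ = 1 - ω / 2 := by
      rw [hc4def, Complex.norm_real, Real.norm_eq_abs, _root_.abs_of_nonneg (by linarith)]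
    calc g (k + 1)
        ≤ ‖c3 • toE (Q *ᵥ e k)‖ + ‖c4 • toE ((((α : ℂ) • (1 : Matrix (Fin n) (Fin n) ℂ) - Wc))
            *ᵥ (P⁻¹ *ᵥ (S *ᵥ e k)))‖ := by rw [h1]; exact norm_add_le _ _
      _ = (ω / 2) * g k + (1 - ω / 2) * ‖toE ((((α : ℂ) • (1 : Matrix (Fin n) (Fin n) ℂ) - Wc))
            *ᵥ (P⁻¹ *ᵥ (S *ᵥ e k)))‖ := by rw [norm_smul, norm_smul, hc3n, hc4n]
      _ ≤ (ω / 2) * g k + (1 - ω / 2) * (θ * g k) := by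
          have : (0 : ℝ) ≤ 1 - ω / 2 := by linarith
          exact add_le_add (le_refl _) (mul_le_mul_of_nonneg_left h2 this)
      _ = r * g k := by rw [hrdef]; ring
  have hgeom : ∀ k, g k ≤ r ^ k * g 0 := by
    intro k
    induction k with
    | zero => simp
    | succ k ih =>
        calc g (k + 1) ≤ r * g k := hcontract k
          _ ≤ r * (r ^ k * g 0) := mul_le_mul_of_nonneg_left ih hr0
          _ = r ^ (k + 1) * g 0 := by ring
  have hgnonneg : ∀ k, 0 ≤ g k := fun k => norm_nonneg _
  have hg0 : Filter.Tendsto g Filter.atTop (nhds 0) := by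
    have hb : Filter.Tendsto (fun k => r ^ k * g 0) Filter.atTop (nhds 0) := by
      have := (tendsto_pow_atTop_nhds_zero_of_lt_one hr0 hr1).mul_const (g 0)
      simpa using this
    exact squeeze_zero hgnonneg hgeom hb
  -- from g to e
  have helow : ∀ k, α * ‖toE (e k)‖ ≤ g k := fun k => hQlow (e k)
  have he0 : Filter.Tendsto (fun k => ‖toE (e k)‖) Filter.atTop (nhds 0) := by
    have hb : Filter.Tendsto (fun k => g k / α) Filter.atTop (nhds 0) := by
      have := hg0.div_const α
      simpa using this
    refine squeeze_zero (fun k => norm_nonneg _) (fun k => ?_) hb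
    rw [le_div_iff₀ hα]
    calc ‖toE (e k)‖ * α = α * ‖toE (e k)‖ := by ring
      _ ≤ g k := helow k
  -- coordinatewise
  have hcoord : ∀ (v : Fin n → ℂ) (i : Fin n), ‖v i‖ ≤ ‖toE v‖ := by
    intro v i
    rw [htoE, EuclideanSpace.norm_eq]
    have h1 : ‖v i‖ ^ 2 ≤ ∑ j, ‖(WithLp.equiv 2 (Fin n → ℂ)).symm v j‖ ^ 2 := by
      have : ∀ j, ((WithLp.equiv 2 (Fin n → ℂ)).symm v) j = v j := fun j => rfl
      simp only [this]
      exact Finset.single_le_sum (f := fun j => ‖v j‖ ^ 2)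
        (fun j _ => sq_nonneg _) (Finset.mem_univ i)
    calc ‖v i‖ = Real.sqrt (‖v i‖ ^ 2) := by
          rw [Real.sqrt_sq (norm_nonneg _)]
      _ ≤ _ := Real.sqrt_le_sqrt h1
  rw [tendsto_pi_nhds]
  intro i
  have hxe : ∀ k, x k i = e k i + xs i := by
    intro k
    rw [hedef]
    simp
  have : Filter.Tendsto (fun k => e k i) Filter.atTop (nhds 0) := by
    refine squeeze_zero_norm (fun k => ?_) he0
    exact hcoord (e k) i
  have h2 : Filter.Tendsto (fun k => e k i + xs i) Filter.atTop (nhds (0 + xs i)) :=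
    this.add_const (xs i)
  rw [zero_add] at h2
  refine h2.congr fun k => (hxe k).symm
end

section
/- Let B be a complex N×N matrix such that the Hermitian part (B + B*)/2 is positive definite, and let α > 0. Then ‖(αI + B)⁻¹(αI − B)‖₂ < 1. -/
open Matrix

private lemma aux_norm_lt {E : Type*} [NormedAddCommGroup E] [NormedSpace ℂ E]
    [FiniteDimensional ℂ E]
    (T : E →L[ℂ] E) (h : ∀ x : E, x ≠ 0 → ‖T x‖ < ‖x‖) : ‖T‖ < 1 := by
  by_cases hT : T = 0
  · simp [hT]
  · obtain ⟨x, hx⟩ : ∃ x, T x ≠ 0 := by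
      by_contra h'
      push_neg at h'
      exact hT (ContinuousLinearMap.ext fun x => by simp [h' x])
    have hx0 : x ≠ 0 := fun h0 => hx (by simp [h0])
    have hsne : (Metric.sphere (0:E) 1).Nonempty := ⟨‖x‖⁻¹ • x, by
      simp [norm_smul, inv_mul_cancel₀ (norm_ne_zero_iff.2 hx0)]⟩
    obtain ⟨x₀, hx₀s, hmax⟩ := (isCompact_sphere (0:E) 1).exists_isMaxOn hsne
      ((T.continuous.norm).continuousOn)
    have hx₀1 : ‖x₀‖ = 1 := by simpa using hx₀s
    have hb : ∀ y : E, ‖T y‖ ≤ ‖T x₀‖ * ‖y‖ := by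
      intro y
      rcases eq_or_ne y 0 with rfl | hy
      · simp
      · have hyn : ‖y‖ ≠ 0 := norm_ne_zero_iff.2 hy
        have hmem : (‖y‖⁻¹ • y) ∈ Metric.sphere (0:E) 1 := by
          simp [norm_smul, inv_mul_cancel₀ hyn]
        have := hmax hmem
        have h2 : ‖y‖⁻¹ * ‖T y‖ ≤ ‖T x₀‖ := by
          simpa [T.map_smul, norm_smul] using this
        calc ‖T y‖ = ‖y‖ * (‖y‖⁻¹ * ‖T y‖) := by field_simp
        _ ≤ ‖y‖ * ‖T x₀‖ := mul_le_mul_of_nonneg_left h2 (norm_nonneg _)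
        _ = ‖T x₀‖ * ‖y‖ := mul_comm _ _
    have := T.opNorm_le_bound (norm_nonneg _) hb
    calc ‖T‖ ≤ ‖T x₀‖ := this
    _ < ‖x₀‖ := h x₀ (by intro h0; rw [h0] at hx₀1; simp at hx₀1)
    _ = 1 := hx₀1

set_option maxHeartbeats 1000000 in
set_option synthInstance.maxHeartbeats 400000 in
open Matrix in
theorem stmt_17 {N : ℕ} (B : Matrix (Fin N) (Fin N) ℂ)
    (hHerm : ((1 / 2 : ℂ) • (B + Bᴴ)).IsHermitian)
    (hB : ∀ y : Fin N → ℂ, y ≠ 0 → 0 < (star y ⬝ᵥ (((1 / 2 : ℂ) • (B + Bᴴ)) *ᵥ y)).re)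
    (α : ℝ) (hα : 0 < α) :
    ‖Matrix.toEuclideanCLM (𝕜 := ℂ)
        (((α : ℂ) • (1 : Matrix (Fin N) (Fin N) ℂ) + B)⁻¹ *
          ((α : ℂ) • (1 : Matrix (Fin N) (Fin N) ℂ) - B))‖ < 1 := by
  set E := EuclideanSpace ℂ (Fin N)
  set A : Matrix (Fin N) (Fin N) ℂ := (α : ℂ) • 1 + B with hAdef
  set C : Matrix (Fin N) (Fin N) ℂ := (α : ℂ) • 1 - B with hCdef
  set φ := Matrix.toEuclideanCLM (𝕜 := ℂ) (n := Fin N)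
  -- positivity of Re ⟪u, φ B u⟫ for u ≠ 0
  have hpos : ∀ u : E, u ≠ 0 → 0 < (inner (𝕜 := ℂ) u (φ B u)).re := by
    intro u hu
    set u' : Fin N → ℂ := WithLp.equiv 2 (Fin N → ℂ) u with hu'
    have hu'0 : u' ≠ 0 := fun h => hu ((WithLp.equiv 2 (Fin N → ℂ)).injective (by simpa [hu'] using h))
    have hform : ∀ M : Matrix (Fin N) (Fin N) ℂ,
        (inner (𝕜 := ℂ) u (φ M u)) = star u' ⬝ᵥ (M *ᵥ u') := by
      intro M
      rw [EuclideanSpace.inner_eq_star_dotProduct]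
      simp [φ, Matrix.ofLp_toEuclideanCLM, Matrix.toLin'_apply, hu']
      rw [dotProduct_comm]
    have hconj : star u' ⬝ᵥ (Bᴴ *ᵥ u') = star (star u' ⬝ᵥ (B *ᵥ u')) := by
      rw [star_dotProduct, star_mulVec, conjTranspose_conjTranspose,
        ← Matrix.dotProduct_mulVec]
    have hre : (inner (𝕜 := ℂ) u (φ B u)).re
        = (star u' ⬝ᵥ (((1 / 2 : ℂ) • (B + Bᴴ)) *ᵥ u')).re := by
      rw [hform]
      rw [Matrix.smul_mulVec, Matrix.add_mulVec, dotProduct_smul,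
        dotProduct_add, hconj]
      set z := star u' ⬝ᵥ (B *ᵥ u')
      simp [Complex.add_re, Complex.mul_re, Complex.conj_re, Complex.conj_im]
      ring
    rw [hre]
    exact hB u' hu'0
  -- invertibility of A
  have hdet : IsUnit A.det := by
    by_contra hd
    have : A.det = 0 := by
      simpa [isUnit_iff_ne_zero] using hd
    obtain ⟨v, hv0, hv⟩ := (Matrix.exists_mulVec_eq_zero_iff).2 this
    set v' : E := (WithLp.equiv 2 (Fin N → ℂ)).symm v with hv'
    have hv'0 : v' ≠ 0 := by
      intro h; apply hv0; have := congrArg WithLp.ofLp h; simpa [hv'] using this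
    have hAv : φ A v' = 0 := by
      have : φ A v' = (WithLp.equiv 2 (Fin N → ℂ)).symm (A *ᵥ v) := by
        simp [φ, hv', Matrix.toLin'_apply]
      rw [this, hv]
      rfl
    have h1 : (inner (𝕜 := ℂ) v' (φ A v')).re
        = α * (inner (𝕜 := ℂ) v' v').re + (inner (𝕜 := ℂ) v' (φ B v')).re := by
      rw [hAdef, map_add, _root_.map_smul, _root_.map_one]
      simp only [ContinuousLinearMap.add_apply, ContinuousLinearMap.smul_apply,
        ContinuousLinearMap.one_apply, inner_add_right, inner_smul_right]
      simp [Complex.add_re, Complex.mul_re, Complex.ofReal_re, Complex.ofReal_im]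
    have hip : 0 ≤ (inner (𝕜 := ℂ) v' v').re := by
      have h2 := inner_self_eq_norm_sq (𝕜 := ℂ) v'
      simp only [RCLike.re_to_complex] at h2
      rw [h2]; positivity
    have : 0 < (inner (𝕜 := ℂ) v' (φ A v')).re := by
      rw [h1]
      have := hpos v' hv'0
      nlinarith
    rw [hAv] at this
    simp at this
  -- A and C commute, and with A⁻¹
  have hAC : A * C = C * A := by
    rw [hAdef, hCdef]
    simp only [add_mul, mul_add, sub_mul, mul_sub, smul_mul_assoc, mul_smul_comm,
      one_mul, mul_one]
    module
  have hinvC : A⁻¹ * C = C * A⁻¹ := by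
    calc A⁻¹ * C = A⁻¹ * C * (A * A⁻¹) := by rw [Matrix.mul_nonsing_inv _ hdet, mul_one]
    _ = A⁻¹ * (C * A) * A⁻¹ := by noncomm_ring
    _ = A⁻¹ * (A * C) * A⁻¹ := by rw [hAC]
    _ = (A⁻¹ * A) * (C * A⁻¹) := by noncomm_ring
    _ = C * A⁻¹ := by rw [Matrix.nonsing_inv_mul _ hdet, one_mul]
  -- key pointwise estimate
  apply aux_norm_lt
  intro x hx
  set u : E := φ A⁻¹ x with hu
  have hmul1 : φ A * φ A⁻¹ = 1 := by
    rw [← _root_.map_mul, Matrix.mul_nonsing_inv _ hdet, _root_.map_one]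
  have hAu : φ A u = x := by
    rw [hu, ← ContinuousLinearMap.mul_apply, hmul1, ContinuousLinearMap.one_apply]
  have hu0 : u ≠ 0 := by
    intro h
    rw [h, map_zero] at hAu
    exact hx hAu.symm
  have hTx : φ (A⁻¹ * C) x = φ C u := by
    rw [hinvC, _root_.map_mul, ContinuousLinearMap.mul_apply, hu]
  rw [hTx, ← hAu]
  -- now show ‖φ C u‖ < ‖φ A u‖
  have hφA : φ A u = (α : ℂ) • u + φ B u := by
    rw [hAdef, map_add, _root_.map_smul, _root_.map_one]
    simp
  have hφC : φ C u = (α : ℂ) • u - φ B u := by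
    rw [hCdef, map_sub, _root_.map_smul, _root_.map_one]
    simp
  have hsq : ‖φ C u‖ ^ 2 < ‖φ A u‖ ^ 2 := by
    rw [hφA, hφC, norm_add_sq (𝕜 := ℂ), norm_sub_sq (𝕜 := ℂ)]
    simp only [RCLike.re_to_complex]
    have hrei : (inner (𝕜 := ℂ) ((α : ℂ) • u) (φ B u)).re
        = α * (inner (𝕜 := ℂ) u (φ B u)).re := by
      rw [inner_smul_left]
      simp [Complex.mul_re, Complex.ofReal_re, Complex.ofReal_im]
    rw [hrei]
    have := hpos u hu0
    nlinarith
  exact lt_of_pow_lt_pow_left₀ 2 (norm_nonneg _) hsq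
end
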